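/- (Denominator Reduction.) Let N ≥ 1, let q ≥ 2 be an integer, let n be an integer with n ≥ ⌈log_q N⌉, and let x_0, …, x_{N−1} be nonnegative integers with ∑_k x_k = q^n. For each integer k with 2 ≤ k ≤ q let v_k be the probability vector on N states with value (k−1)/k at state 0, value 1/k at state N−1, and 0 elsewhere. Then (x_0/q^n, …, x_{N−1}/q^n) is realizable from the switch set {v_k : 2 ≤ k ≤ q} with at most (N−1)(q−1)(n − ⌈log_q N⌉) + q^{⌈log_q N⌉} − 1 pswitches. -/

import Mathlib

noncomputable section

/-- Series composition: distribution of `min` of two independent states. -/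
def smin {N : ℕ} (p q : Fin N → ℝ) : Fin N → ℝ :=
  fun k => ∑ i, ∑ j, if min i j = k then p i * q j else 0

/-- Parallel composition: distribution of `max` of two independent states. -/
def smax {N : ℕ} (p q : Fin N → ℝ) : Fin N → ℝ :=
  fun k => ∑ i, ∑ j, if max i j = k then p i * q j else 0

/-- The point mass at state `s`. -/
def delta {N : ℕ} (s : Fin N) : Fin N → ℝ := fun i => if i = s then 1 else 0

/-- `Realizable S p m`: the vector `p` is obtained from point masses (0 pswitches)
and elements of the switch set `S` (1 pswitch each) by series and parallel
compositions, using `m` pswitches in total. -/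
inductive Realizable {N : ℕ} (S : Set (Fin N → ℝ)) : (Fin N → ℝ) → ℕ → Prop
  | point (s : Fin N) : Realizable S (delta s) 0
  | single {p : Fin N → ℝ} : p ∈ S → Realizable S p 1
  | series {p q : Fin N → ℝ} {a b : ℕ} :
      Realizable S p a → Realizable S q b → Realizable S (smin p q) (a + b)
  | parallel {p q : Fin N → ℝ} {a b : ℕ} :
      Realizable S p a → Realizable S q b → Realizable S (smax p q) (a + b)

/-- The `N`-state ½-pswitch: probability ½ on state `0`, ½ on state `N-1`,
and `0` elsewhere. -/
def halfSwitch (N : ℕ) : Fin N → ℝ :=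
  fun i => (if (i : ℕ) = 0 then (1 : ℝ) / 2 else 0) + (if (i : ℕ) = N - 1 then (1 : ℝ) / 2 else 0)

/-- The complexity function `f(n,N)`: `2^n - 1` for `n ≤ ⌈log₂ N⌉` and
`(N-1)(n - ⌈log₂ N⌉) + 2^{⌈log₂ N⌉} - 1` for `n ≥ ⌈log₂ N⌉`. -/
def f (n N : ℕ) : ℕ :=
  if n ≤ Nat.clog 2 N then 2 ^ n - 1
  else (N - 1) * (n - Nat.clog 2 N) + 2 ^ (Nat.clog 2 N) - 1

/-- The pswitch `v_k`: probability `(k-1)/k` on state `0`, `1/k` on state `N-1`,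
and `0` elsewhere. -/
def qSwitch (N k : ℕ) : Fin N → ℝ :=
  fun i => (if (i : ℕ) = 0 then ((k : ℝ) - 1) / k else 0) +
    (if (i : ℕ) = N - 1 then 1 / (k : ℝ) else 0)

/-!
Write `x / q ^ n` as the empirical distribution of the nondecreasing sequence of `q ^ n` tokens
in which state `i` occurs `x i` times. If `r` is the empirical distribution of a block of `j * L`
consecutive tokens and `p` that of the next `L` tokens, then every state charged by `r` is at
most every state charged by `p`, so `p ∗ (r ⊕ v_{j+1})` is the mixture `(1/(j+1)) p + (j/(j+1)) r`,
the empirical distribution of the merged block. Hence a block of length `q ^ (m+1)` is assembled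
from its `q` sub-blocks of length `q ^ m` with `q - 1` pswitches, and a constant block is a point
mass for free. The spreads (last token minus first token) of disjoint blocks add up to at most
`N - 1`, so at most `min (q ^ l) (N - 1)` of the `q ^ l` blocks at depth `l` are nonconstant;
bounding this by `q ^ l` below depth `⌈log_q N⌉` and by `N - 1` from there on gives the bound.

Identities between compositions are checked on tail sums `t ↦ ∑_{i ≥ t} p i`: these determine
`p`, multiply under `∗`, and their complements multiply under `⊕`.
-/

open Finset

section

variable {N : ℕ}

def tailMass (p : Fin N → ℝ) (t : ℕ) : ℝ := ∑ i : Fin N, if t ≤ (i : ℕ) then p i else 0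

lemma tailMass_zero (p : Fin N → ℝ) : tailMass p 0 = ∑ i, p i := by
  simp [tailMass]

lemma tailMass_eq_zero_of_le (p : Fin N → ℝ) {t : ℕ} (ht : N ≤ t) : tailMass p t = 0 :=
  sum_eq_zero fun i _ => if_neg (by omega)

lemma tailMass_sub_tailMass_succ (p : Fin N → ℝ) (i : Fin N) :
    tailMass p i - tailMass p (i + 1) = p i := by
  rw [tailMass, tailMass, ← sum_sub_distrib, sum_eq_single i]
  · simp
  · intro j _ hj
    have : (j : ℕ) ≠ i := fun h => hj (Fin.ext h)
    split_ifs <;> first | ring1 | omega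
  · simp

lemma tailMass_injective : Function.Injective (tailMass (N := N)) := fun p r h => by
  funext i
  rw [← tailMass_sub_tailMass_succ p, ← tailMass_sub_tailMass_succ r, h]

lemma tailMass_add (p r : Fin N → ℝ) (t : ℕ) :
    tailMass (p + r) t = tailMass p t + tailMass r t := by
  simp only [tailMass, ← sum_add_distrib, Pi.add_apply]
  exact sum_congr rfl fun i _ => by split_ifs <;> simp

lemma tailMass_smul (c : ℝ) (p : Fin N → ℝ) (t : ℕ) : tailMass (c • p) t = c * tailMass p t := by
  simp only [tailMass, mul_sum, Pi.smul_apply, smul_eq_mul, mul_ite, mul_zero]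

lemma tailMass_sum {ι : Type*} (s : Finset ι) (p : ι → Fin N → ℝ) (t : ℕ) :
    tailMass (∑ j ∈ s, p j) t = ∑ j ∈ s, tailMass (p j) t := by
  simp only [tailMass, Finset.sum_apply]
  rw [sum_comm]
  exact sum_congr rfl fun i _ => by split_ifs <;> simp

lemma tailMass_delta (s : Fin N) (t : ℕ) : tailMass (delta s) t = if t ≤ (s : ℕ) then 1 else 0 := by
  rw [tailMass, sum_eq_single s (fun j _ hj => by simp [delta, hj])] <;> simp [delta]

lemma tailMass_map₂ (g : Fin N → Fin N → Fin N) (p r : Fin N → ℝ) (t : ℕ) :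
    tailMass (fun k => ∑ i, ∑ j, if g i j = k then p i * r j else 0) t =
      ∑ i, ∑ j, if t ≤ (g i j : ℕ) then p i * r j else 0 := by
  calc _ = ∑ k, ∑ i, ∑ j, if g i j = k then (if t ≤ (k : ℕ) then p i * r j else 0) else 0 :=
        sum_congr rfl fun k _ => by split_ifs <;> simp [*]
    _ = ∑ i, ∑ j, ∑ k, if g i j = k then (if t ≤ (k : ℕ) then p i * r j else 0) else 0 := by
        rw [sum_comm]; exact sum_congr rfl fun i _ => sum_comm
    _ = _ := by simp

lemma tailMass_smin (p r : Fin N → ℝ) (t : ℕ) :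
    tailMass (smin p r) t = tailMass p t * tailMass r t := by
  unfold smin; rw [tailMass_map₂]
  simp only [tailMass, sum_mul_sum, Fin.coe_min, le_min_iff]
  refine sum_congr rfl fun i _ => sum_congr rfl fun j _ => ?_
  split_ifs <;> simp_all

lemma sum_sub_tailMass (p : Fin N → ℝ) (t : ℕ) :
    ∑ i, p i - tailMass p t = ∑ i : Fin N, if (i : ℕ) < t then p i else 0 := by
  rw [tailMass, ← sum_sub_distrib]
  exact sum_congr rfl fun i _ => by split_ifs <;> first | ring1 | omega

lemma tailMass_smax (p r : Fin N → ℝ) (t : ℕ) :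
    tailMass (smax p r) t =
      (∑ i, p i) * (∑ j, r j) - (∑ i, p i - tailMass p t) * (∑ j, r j - tailMass r t) := by
  unfold smax; rw [tailMass_map₂, sum_sub_tailMass, sum_sub_tailMass]
  simp only [sum_mul_sum, ← sum_sub_distrib, Fin.coe_max, le_max_iff]
  refine sum_congr rfl fun i _ => sum_congr rfl fun j _ => ?_
  split_ifs <;> first | ring1 | omega

lemma tailMass_qSwitch (hN : 0 < N) (k t : ℕ) :
    tailMass (qSwitch N k) t =
      (if t = 0 then ((k : ℝ) - 1) / k else 0) + (if t ≤ N - 1 then 1 / (k : ℝ) else 0) := by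
  have hterm (i : Fin N) : (if t ≤ (i : ℕ) then qSwitch N k i else 0) =
      (if (i : ℕ) = 0 then if t = 0 then ((k : ℝ) - 1) / k else 0 else 0) +
        (if (i : ℕ) = N - 1 then if t ≤ N - 1 then 1 / (k : ℝ) else 0 else 0) := by
    unfold qSwitch
    split_ifs <;> first | ring1 | omega
  rw [tailMass, sum_congr rfl fun i _ => hterm i, sum_add_distrib,
    Fin.sum_univ_eq_sum_range (fun i => if i = 0 then _ else 0),
    Fin.sum_univ_eq_sum_range (fun i => if i = N - 1 then _ else 0)]
  simp [hN]

lemma sum_qSwitch (hN : 0 < N) {k : ℕ} (hk : k ≠ 0) : ∑ i, qSwitch N k i = 1 := by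
  rw [← tailMass_zero, tailMass_qSwitch hN, if_pos rfl, if_pos (Nat.zero_le _)]
  field_simp
  ring

lemma tailMass_qSwitch_of_pos_of_lt (k : ℕ) {t : ℕ} (ht : 0 < t) (htN : t < N) :
    tailMass (qSwitch N k) t = (k : ℝ)⁻¹ := by
  rw [tailMass_qSwitch (by omega), if_neg (by omega), if_pos (by omega)]
  simp

/-- `hpr` says that `r` lies weakly below `p`: no state charged by `r` exceeds a state charged
by `p`. -/
theorem smin_smax_qSwitch {p r : Fin N → ℝ} {k : ℕ} (hk : k ≠ 0) (hp : ∑ i, p i = 1)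
    (hr : ∑ i, r i = 1) (hpr : ∀ t, tailMass p t = 1 ∨ tailMass r t = 0) :
    smin p (smax r (qSwitch N k)) = (k : ℝ)⁻¹ • p + (1 - (k : ℝ)⁻¹) • r := by
  have hN : 0 < N := Nat.pos_of_ne_zero (by rintro rfl; simp at hp)
  apply tailMass_injective
  funext t
  simp only [tailMass_add, tailMass_smul, tailMass_smin, tailMass_smax, hr, sum_qSwitch hN hk]
  rcases Nat.eq_zero_or_pos t with rfl | ht
  · simp [tailMass_zero, hp, hr]
  rcases le_or_gt N t with htN | htN
  · simp [tailMass_eq_zero_of_le _ htN]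
  rw [tailMass_qSwitch_of_pos_of_lt k ht htN]
  rcases hpr t with h | h <;> rw [h] <;> ring

section Blocks

variable {T : ℕ → Fin N}

def blockDist (T : ℕ → Fin N) (a L : ℕ) : Fin N → ℝ :=
  (L : ℝ)⁻¹ • ∑ s ∈ Ico a (a + L), delta (T s)

def spread (T : ℕ → Fin N) (a L : ℕ) : ℕ := T (a + L - 1) - T a

lemma blockDist_apply (T : ℕ → Fin N) (a L : ℕ) (i : Fin N) :
    blockDist T a L i = #{s ∈ Ico a (a + L) | T s = i} / L := by
  simp [blockDist, delta, Finset.sum_apply, sum_boole, div_eq_inv_mul, eq_comm]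

lemma tailMass_blockDist (T : ℕ → Fin N) (a L t : ℕ) :
    tailMass (blockDist T a L) t =
      (L : ℝ)⁻¹ * ∑ s ∈ Ico a (a + L), if t ≤ (T s : ℕ) then 1 else 0 := by
  simp only [blockDist, tailMass_smul, tailMass_sum, tailMass_delta]

lemma sum_blockDist (T : ℕ → Fin N) (a : ℕ) {L : ℕ} (hL : L ≠ 0) :
    ∑ i, blockDist T a L i = 1 := by
  rw [← tailMass_zero, tailMass_blockDist]
  simp [hL]

lemma tailMass_blockDist_eq_one (hT : Monotone T) {a L t : ℕ} (hL : L ≠ 0) (ht : t ≤ T a) :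
    tailMass (blockDist T a L) t = 1 := by
  rw [tailMass_blockDist, sum_congr rfl fun s hs => if_pos (ht.trans (hT (mem_Ico.1 hs).1))]
  simp [hL]

lemma tailMass_blockDist_eq_zero (hT : Monotone T) {a L t : ℕ} (ht : T (a + L - 1) < t) :
    tailMass (blockDist T a L) t = 0 := by
  rw [tailMass_blockDist, sum_eq_zero fun s hs => if_neg ?_, mul_zero]
  have : (T s : ℕ) ≤ T (a + L - 1) := hT (by have := mem_Ico.1 hs; omega)
  omega

lemma blockDist_eq_delta (hT : Monotone T) {a L : ℕ} (hL : L ≠ 0) (h : spread T a L = 0) :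
    blockDist T a L = delta (T a) := by
  refine tailMass_injective (funext fun t => ?_)
  rw [tailMass_delta]
  split_ifs with ht
  · exact tailMass_blockDist_eq_one hT hL ht
  · exact tailMass_blockDist_eq_zero hT (by unfold spread at h; omega)

lemma spread_add_le (hT : Monotone T) (a : ℕ) {L₁ L₂ : ℕ} (h₁ : L₁ ≠ 0) (h₂ : L₂ ≠ 0) :
    spread T a L₁ + spread T (a + L₁) L₂ ≤ spread T a (L₁ + L₂) := by
  have : (T a : ℕ) ≤ T (a + L₁ - 1) := hT (by omega)
  have : (T (a + L₁ - 1) : ℕ) ≤ T (a + L₁) := hT (by omega)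
  have : (T (a + L₁) : ℕ) ≤ T (a + L₁ + L₂ - 1) := hT (by omega)
  unfold spread
  rw [← add_assoc]
  omega

lemma blockDist_succ_mul (T : ℕ → Fin N) (a : ℕ) {j L : ℕ} (hj : j ≠ 0) (hL : L ≠ 0) :
    blockDist T a ((j + 1) * L) =
      ((j + 1 : ℕ) : ℝ)⁻¹ • blockDist T (a + j * L) L +
        (1 - ((j + 1 : ℕ) : ℝ)⁻¹) • blockDist T a (j * L) := by
  have hcoeff : (1 - ((j + 1 : ℕ) : ℝ)⁻¹) * ((j * L : ℕ) : ℝ)⁻¹ = (((j + 1) * L : ℕ) : ℝ)⁻¹ := by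
    push_cast
    field_simp
    ring
  have hcoeff' : ((j + 1 : ℕ) : ℝ)⁻¹ * (L : ℝ)⁻¹ = (((j + 1) * L : ℕ) : ℝ)⁻¹ := by
    rw [← mul_inv, Nat.cast_mul]
  rw [blockDist, blockDist, blockDist, smul_smul, smul_smul, hcoeff, hcoeff', ← smul_add,
    add_comm (∑ s ∈ Ico (a + j * L) _, _), sum_Ico_consecutive _ (by omega) (by omega)]
  congr 3
  ring

end Blocks

def qSwitchSet (N q : ℕ) : Set (Fin N → ℝ) := {v | ∃ k : ℕ, 2 ≤ k ∧ k ≤ q ∧ v = qSwitch N k}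

section Realizability

variable {T : ℕ → Fin N}

lemma realizable_blockDist_of_spread_eq_zero {S : Set (Fin N → ℝ)} (hT : Monotone T) {a L : ℕ}
    (hL : L ≠ 0) (h : spread T a L = 0) : Realizable S (blockDist T a L) 0 := by
  rw [blockDist_eq_delta hT hL h]
  exact .point _

lemma realizable_blockDist_succ_mul {S : Set (Fin N → ℝ)} (hT : Monotone T) {a j L c₁ c₂ : ℕ}
    (hj : j ≠ 0) (hL : L ≠ 0) (hv : qSwitch N (j + 1) ∈ S)
    (h₁ : Realizable S (blockDist T (a + j * L) L) c₁)
    (h₂ : Realizable S (blockDist T a (j * L)) c₂) :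
    Realizable S (blockDist T a ((j + 1) * L)) (c₁ + (c₂ + 1)) := by
  have hsep (t : ℕ) : tailMass (blockDist T (a + j * L) L) t = 1 ∨
      tailMass (blockDist T a (j * L)) t = 0 := by
    by_cases ht : t ≤ T (a + j * L)
    · exact .inl (tailMass_blockDist_eq_one hT hL ht)
    · have : (T (a + j * L - 1) : ℕ) ≤ T (a + j * L) := hT (by omega)
      exact .inr (tailMass_blockDist_eq_zero hT (by omega))
  have h := h₁.series (h₂.parallel (.single hv))
  rwa [smin_smax_qSwitch (Nat.succ_ne_zero j) (sum_blockDist T _ hL)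
    (sum_blockDist T a (mul_ne_zero hj hL)) hsep, ← blockDist_succ_mul T a hj hL] at h

lemma sum_min_add_sum_min_le {ι : Type*} (I : Finset ι) (f g : ι → ℕ) {a b c : ℕ}
    (h : a + b ≤ c) :
    ∑ i ∈ I, min (f i) a + ∑ i ∈ I, min (g i) b ≤ ∑ i ∈ I, min (f i + g i) c := by
  rw [← sum_add_distrib]
  exact sum_le_sum fun i _ => min_add_min_le_min_add_add.trans (min_le_min_left _ h)

variable {q : ℕ}

lemma realizable_blockDist_mul_pow (hT : Monotone T) {m : ℕ}
    (hblock : ∀ a, ∃ c ≤ (q - 1) * ∑ l ∈ range m, min (q ^ l) (spread T a (q ^ m)),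
      Realizable (qSwitchSet N q) (blockDist T a (q ^ m)) c)
    (a : ℕ) {j : ℕ} (hj : j ≠ 0) (hjq : j ≤ q) :
    ∃ c ≤ (j - 1) + (q - 1) * ∑ l ∈ range m, min (j * q ^ l) (spread T a (j * q ^ m)),
      Realizable (qSwitchSet N q) (blockDist T a (j * q ^ m)) c := by
  induction j with
  | zero => exact absurd rfl hj
  | succ j ihj =>
    rcases Nat.eq_zero_or_pos j with rfl | hj₀
    · simpa using hblock a
    have hQ : q ^ m ≠ 0 := pow_ne_zero _ (by omega)
    obtain ⟨c₁, hc₁, hr₁⟩ := hblock (a + j * q ^ m)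
    obtain ⟨c₂, hc₂, hr₂⟩ := ihj hj₀.ne' (by omega)
    refine ⟨c₁ + (c₂ + 1), ?_, realizable_blockDist_succ_mul hT hj₀.ne' hQ
      ⟨j + 1, by omega, hjq, rfl⟩ hr₁ hr₂⟩
    have hspread := spread_add_le hT a (mul_ne_zero hj₀.ne' hQ) hQ
    rw [← add_one_mul] at hspread
    have hsum := Nat.mul_le_mul_left (q - 1)
      (sum_min_add_sum_min_le (range m) (fun l => j * q ^ l) (fun l => q ^ l) hspread)
    simp only [← add_one_mul, mul_add] at hsum
    omega

theorem realizable_blockDist_pow (hq : 0 < q) (hT : Monotone T) (m a : ℕ) :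
    ∃ c ≤ (q - 1) * ∑ l ∈ range m, min (q ^ l) (spread T a (q ^ m)),
      Realizable (qSwitchSet N q) (blockDist T a (q ^ m)) c := by
  induction m generalizing a with
  | zero =>
    exact ⟨0, Nat.zero_le _, realizable_blockDist_of_spread_eq_zero hT (by simp) (by simp [spread])⟩
  | succ m ih =>
    by_cases hs : spread T a (q ^ (m + 1)) = 0
    · exact ⟨0, Nat.zero_le _, realizable_blockDist_of_spread_eq_zero hT (by positivity) hs⟩
    obtain ⟨c, hc, hr⟩ := realizable_blockDist_mul_pow hT ih a hq.ne' le_rfl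
    simp only [← pow_succ'] at hc hr
    refine ⟨c, hc.trans_eq ?_, hr⟩
    rw [sum_range_succ', pow_zero, min_eq_left (by omega), mul_add, mul_one, add_comm]

end Realizability

lemma mul_sum_min_pow_le (q n c s : ℕ) :
    (q - 1) * ∑ l ∈ range n, min (q ^ l) s ≤ s * (q - 1) * (n - c) + q ^ c - 1 := by
  rcases Nat.eq_zero_or_pos q with rfl | hq
  · simp
  rw [← sum_range_add_sum_Ico _ (min_le_right c n), mul_add]
  have hgeom : (q - 1) * ∑ l ∈ range (min c n), q ^ l + 1 = q ^ min c n := by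
    have := geom_sum_mul_add (q - 1) (min c n)
    rwa [show q - 1 + 1 = q by omega, mul_comm] at this
  have hlow : (q - 1) * ∑ l ∈ range (min c n), min (q ^ l) s ≤ q ^ c - 1 := by
    have : (q - 1) * ∑ l ∈ range (min c n), min (q ^ l) s ≤
        (q - 1) * ∑ l ∈ range (min c n), q ^ l := by
      gcongr; exact min_le_left _ _
    have : q ^ min c n ≤ q ^ c := pow_le_pow_right₀ hq (min_le_left c n)
    omega
  have hhigh : (q - 1) * ∑ l ∈ Ico (min c n) n, min (q ^ l) s ≤ s * (q - 1) * (n - c) :=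
    calc _ ≤ (q - 1) * ∑ l ∈ Ico (min c n) n, s := by gcongr; exact min_le_right _ _
      _ = s * (q - 1) * (n - c) := by
        rw [sum_const, Nat.card_Ico, smul_eq_mul, show n - min c n = n - c by omega]; ring
  have : 0 < q ^ c := pow_pos hq c
  omega

theorem exists_monotone_card_filter_eq (x : Fin N → ℕ) (hx : ∑ i, x i ≠ 0) :
    ∃ T : ℕ → Fin N, Monotone T ∧ ∀ i, #{s ∈ range (∑ i, x i) | T s = i} = x i := by
  set M := ∑ i, x i
  let e : Fin M ≃o Σₗ i, Fin (x i) :=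
    Fintype.orderIsoFinOfCardEq _ (by simp [M, Fintype.card_sigma])
  let clamp (s : ℕ) : Fin M := ⟨min s (M - 1), by omega⟩
  refine ⟨fun s => (e (clamp s)).1, fun s s' h => ?_, fun i => ?_⟩
  · have hle : e (clamp s) ≤ e (clamp s') := e.monotone (Fin.mk_le_mk.2 (min_le_min_right _ h))
    rcases Sigma.Lex.le_def.1 hle with hlt | ⟨heq, -⟩
    · exact hlt.le
    · exact heq.le
  · have hclamp (s : Fin M) : clamp s = s := Fin.ext (by simp only [clamp]; omega)
    rw [card_filter, ← Fin.sum_univ_eq_sum_range (fun s => if (e (clamp s)).1 = i then 1 else 0)]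
    simp only [hclamp]
    exact (e.toEquiv.sum_comp (fun τ => if τ.1 = i then 1 else 0)).trans
      ((Fintype.sum_sigma _).trans (by simp [apply_ite]))

end

theorem denominator_reduction_general (N : ℕ) (q : ℕ) (hq : 2 ≤ q)
    (n : ℕ) (x : Fin N → ℕ) (hx : ∑ k, x k = q ^ n) :
    ∃ m ≤ (N - 1) * (q - 1) * (n - Nat.clog q N) + q ^ (Nat.clog q N) - 1,
      Realizable {v : Fin N → ℝ | ∃ k : ℕ, 2 ≤ k ∧ k ≤ q ∧ v = qSwitch N k}
        (fun i => (x i : ℝ) / q ^ n) m := by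
  obtain ⟨T, hT, hfiber⟩ := exists_monotone_card_filter_eq x (by rw [hx]; positivity)
  obtain ⟨c, hc, hr⟩ := realizable_blockDist_pow (by omega : 0 < q) hT n 0
  have hspread : spread T 0 (q ^ n) ≤ N - 1 := by
    have := (T (0 + q ^ n - 1)).isLt
    unfold spread
    omega
  have hdist : blockDist T 0 (q ^ n) = fun i => (x i : ℝ) / q ^ n := by
    funext i
    rw [blockDist_apply, zero_add, ← range_eq_Ico, ← hx, hfiber, hx]
    push_cast
    rfl
  refine ⟨c, hc.trans <| (Nat.mul_le_mul_left _ <| sum_le_sum fun l _ =>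
    min_le_min_left _ hspread).trans (mul_sum_min_pow_le q n _ (N - 1)), hdist ▸ hr⟩

/-- Denominator Reduction: any `(x₀/q^n, …, x_{N-1}/q^n)` is realizable from the
switch set `{v_k : 2 ≤ k ≤ q}` using at most
`(N-1)(q-1)(n - ⌈log_q N⌉) + q^{⌈log_q N⌉} - 1` pswitches. -/
theorem denominator_reduction (N : ℕ) (hN : 1 ≤ N) (q : ℕ) (hq : 2 ≤ q)
    (n : ℕ) (hn : Nat.clog q N ≤ n) (x : Fin N → ℕ) (hx : ∑ k, x k = q ^ n) :
    ∃ m ≤ (N - 1) * (q - 1) * (n - Nat.clog q N) + q ^ (Nat.clog q N) - 1,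
      Realizable {v : Fin N → ℝ | ∃ k : ℕ, 2 ≤ k ∧ k ≤ q ∧ v = qSwitch N k}
        (fun i => (x i : ℝ) / q ^ n) m :=
  denominator_reduction_general N q hq n x hx
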